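/- Let α > 0, η₊ > 0, η₋ > 0 and u ∈ ℝ. Define ν : ℝ \ {0} → ℝ by ν(x) = α e^{−x/η₊}/x for x > 0 and ν(x) = α e^{x/η₋}/|x| for x < 0. Then x ↦ (e^{iux} − 1) ν(x) is absolutely integrable on ℝ \ {0} and ∫_{ℝ\{0}} (e^{iux} − 1) ν(x) dx = −α [Log(1 − iη₊u) + Log(1 + iη₋u)], where Log is the principal complex logarithm; consequently exp(∫_{ℝ\{0}} (e^{iux} − 1) ν(x) dx) = ((1 − iη₊u)(1 + iη₋u))^{−α} with the principal complex power. -/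

import Mathlib

open MeasureTheory Complex

/-- The jump intensity density of the variance–gamma model with parameters
`(α, η₊, η₋)`: `ν(x) = α e^{-x/η₊}/x` for `x > 0` and `ν(x) = α e^{x/η₋}/|x|`
for `x < 0`. -/
noncomputable def vgLevyDensity (α ηp ηm : ℝ) (x : ℝ) : ℝ :=
  if 0 < x then α * Real.exp (-x / ηp) / x else α * Real.exp (x / ηm) / |x|

section VGAux
open Set Filter intervalIntegral

lemma norm_cexp_I_mul_sub_one_le (t : ℝ) :
    ‖Complex.exp (Complex.I * t) - 1‖ ≤ 2 * |t| := by
  rcases le_or_gt |t| 1 with h | h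
  · have := Complex.norm_exp_sub_one_le (x := Complex.I * t) (by
      simpa [map_mul] using h)
    simpa [map_mul] using this
  · have h1 : ‖Complex.exp (Complex.I * t) - 1‖ ≤ ‖Complex.exp (Complex.I * t)‖ + ‖(1 : ℂ)‖ :=
      norm_sub_le _ _
    have h2 : ‖Complex.exp (Complex.I * t)‖ = 1 := by
      simp [Complex.norm_exp]
    rw [h2] at h1
    simp only [norm_one] at h1
    nlinarith [abs_nonneg t]

lemma integrableOn_cexp_Ioi {c : ℂ} (hc : c.re < 0) :
    IntegrableOn (fun x : ℝ => Complex.exp (c * x)) (Ioi (0 : ℝ)) := by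
  have hg : IntegrableOn (fun x : ℝ => Real.exp (c.re * x)) (Ioi (0 : ℝ)) := by
    have := exp_neg_integrableOn_Ioi 0 (neg_pos.2 hc)
    simpa [neg_mul, neg_neg] using this
  apply Integrable.mono' hg
  · exact (Continuous.aestronglyMeasurable (by continuity)).restrict
  · filter_upwards with x
    simp [Complex.norm_exp, mul_comm]

lemma integral_cexp_Ioi {c : ℂ} (hc : c.re < 0) :
    ∫ x in Ioi (0 : ℝ), Complex.exp (c * x) = -c⁻¹ := by
  have hc0 : c ≠ 0 := fun h => by simp [h] at hc
  have hderiv : ∀ x ∈ Ici (0 : ℝ),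
      HasDerivAt (fun x : ℝ => Complex.exp (c * x) / c) (Complex.exp (c * x)) x := by
    intro x _
    have h1 : HasDerivAt (fun z : ℂ => Complex.exp (c * z) / c) (Complex.exp (c * x)) (x : ℂ) := by
      have := (((hasDerivAt_id (x : ℂ)).const_mul c).cexp).div_const c
      simpa [mul_comm, mul_div_assoc, mul_div_cancel_right₀, hc0, mul_one] using this
    exact h1.comp_ofReal
  have htend : Tendsto (fun x : ℝ => Complex.exp (c * x) / c) atTop (nhds 0) := by
    rw [show (0 : ℂ) = 0 / c by simp]
    apply Tendsto.div_const
    rw [tendsto_zero_iff_norm_tendsto_zero]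
    have h3 : ∀ x : ℝ, ‖Complex.exp (c * x)‖ = Real.exp (c.re * x) := fun x => by
      simp [Complex.norm_exp, mul_comm]
    simp_rw [h3]
    exact Real.tendsto_exp_atBot.comp (tendsto_id.const_mul_atTop_of_neg hc)
  have := integral_Ioi_of_hasDerivAt_of_tendsto' hderiv (integrableOn_cexp_Ioi hc) htend
  rw [this]
  simp [div_eq_mul_inv]

lemma coreVal_nonneg (η u : ℝ) (hη : 0 < η) (hu : 0 ≤ u) :
    ∫ x in Ioi (0 : ℝ), (Complex.exp (Complex.I * u * x) - 1) *
        ((Real.exp (-x / η) / x : ℝ) : ℂ) =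
      -Complex.log (1 - Complex.I * η * u) := by
  set t : ℝ := 1 / η with ht_def
  have ht : 0 < t := by positivity
  set h : ℝ → ℝ → ℂ := fun x v => Complex.I * Complex.exp ((Complex.I * v - t) * x) with hh
  -- Step 1: pointwise identity on Ioi 0
  have step1 : ∀ x ∈ Ioi (0 : ℝ),
      (Complex.exp (Complex.I * u * x) - 1) * ((Real.exp (-x / η) / x : ℝ) : ℂ)
        = ∫ v in Ioc (0 : ℝ) u, h x v := by
    intro x hx
    rw [mem_Ioi] at hx
    have hx0 : (x : ℂ) ≠ 0 := by exact_mod_cast hx.ne'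
    rw [← intervalIntegral.integral_of_le hu]
    have key : ∀ v : ℝ, h x v = Complex.I * Complex.exp (Complex.I * x * v) *
        Complex.exp (-(t : ℂ) * x) := by
      intro v
      show Complex.I * Complex.exp ((Complex.I * v - t) * x) = _
      rw [mul_assoc, ← Complex.exp_add]
      congr 2
      ring
    simp_rw [key]
    rw [intervalIntegral.integral_mul_const, intervalIntegral.integral_const_mul,
      integral_exp_mul_complex (by simpa using hx0 : Complex.I * (x : ℂ) ≠ 0)]
    have hexp : ((Real.exp (-x / η) : ℝ) : ℂ) = Complex.exp (-(t : ℂ) * x) := by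
      rw [Complex.ofReal_exp]
      congr 1
      push_cast [ht_def]
      field_simp
    rw [Complex.ofReal_div, hexp]
    simp only [Complex.ofReal_zero, mul_zero, Complex.exp_zero]
    field_simp
  rw [setIntegral_congr_fun measurableSet_Ioi step1]
  -- Step 2: integrability on the product
  have hint : Integrable (Function.uncurry h)
      ((volume.restrict (Ioi (0:ℝ))).prod (volume.restrict (Ioc (0:ℝ) u))) := by
    have hg : Integrable (fun p : ℝ × ℝ => Real.exp (-t * p.1) * 1)
        ((volume.restrict (Ioi (0:ℝ))).prod (volume.restrict (Ioc (0:ℝ) u))) :=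
      Integrable.mul_prod (f := fun x => Real.exp (-t * x)) (g := fun _ => (1:ℝ))
        (exp_neg_integrableOn_Ioi 0 ht) (integrable_const 1)
    apply Integrable.mono' hg
    · apply Continuous.aestronglyMeasurable
      apply continuous_const.mul
      exact Complex.continuous_exp.comp (by fun_prop)
    · filter_upwards with p
      simp only [Function.uncurry, hh, norm_mul, mul_one]
      rw [Complex.norm_I, Complex.norm_exp, one_mul]
      apply le_of_eq
      congr 1
      simp [mul_comm]
  -- Step 3: swap
  rw [MeasureTheory.integral_integral_swap hint]
  -- Step 4: inner integral
  have step4 : ∀ v : ℝ, (∫ x in Ioi (0:ℝ), h x v)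
      = Complex.I * ((t : ℂ) - Complex.I * v)⁻¹ := by
    intro v
    have hre : ((Complex.I * v - t : ℂ)).re < 0 := by simp [ht]
    rw [hh]
    simp only
    rw [MeasureTheory.integral_const_mul, integral_cexp_Ioi hre,
      show ((t:ℂ) - Complex.I * v) = -(Complex.I * v - t) by ring, inv_neg]
  simp_rw [step4]
  -- Step 5: outer integral via FTC
  have step5 : (∫ v in Ioc (0:ℝ) u, Complex.I * ((t : ℂ) - Complex.I * v)⁻¹)
      = -Complex.log ((t : ℂ) - Complex.I * u) + Complex.log (t : ℂ) := by
    rw [← intervalIntegral.integral_of_le hu]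
    have hne : ∀ v : ℝ, ((t : ℂ) - Complex.I * v) ≠ 0 := by
      intro v h0
      have := congrArg Complex.re h0
      simp at this
      exact ht.ne' this
    have hderiv : ∀ v ∈ Set.uIcc (0:ℝ) u,
        HasDerivAt (fun v : ℝ => -Complex.log ((t : ℂ) - Complex.I * v))
          (Complex.I * ((t : ℂ) - Complex.I * v)⁻¹) v := by
      intro v _
      have hinner : HasDerivAt (fun v : ℝ => (t : ℂ) - Complex.I * v) (-Complex.I) v := by
        have h2 : HasDerivAt (fun z : ℂ => (t : ℂ) - Complex.I * z) (-Complex.I) (v : ℂ) := by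
          simpa using ((hasDerivAt_id (v : ℂ)).const_mul Complex.I).const_sub (t : ℂ)
        exact h2.comp_ofReal
      have hslit : ((t : ℂ) - Complex.I * v) ∈ Complex.slitPlane :=
        Complex.mem_slitPlane_iff.2 (Or.inl (by simp [ht]))
      have hlog := (hinner.clog_real hslit).neg
      have e : (-(-Complex.I / ((t : ℂ) - Complex.I * v))) = Complex.I * ((t : ℂ) - Complex.I * v)⁻¹ := by
        ring
      rw [e] at hlog
      exact hlog
    have hcont : ContinuousOn (fun v : ℝ => Complex.I * ((t : ℂ) - Complex.I * v)⁻¹)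
        (Set.uIcc 0 u) := by
      apply ContinuousOn.mul continuousOn_const
      exact ContinuousOn.inv₀ (by fun_prop) (fun v _ => hne v)
    rw [intervalIntegral.integral_eq_sub_of_hasDerivAt hderiv (hcont.intervalIntegrable)]
    simp only [Complex.ofReal_zero, mul_zero, sub_zero]
    ring
  rw [step5]
  -- Step 6: log algebra
  have h1 : (1 : ℂ) - Complex.I * η * u ≠ 0 := by
    intro h0
    have := congrArg Complex.re h0
    simp at this
  have hfac : ((t : ℂ) - Complex.I * u) = (t : ℝ) * ((1 : ℂ) - Complex.I * η * u) := by
    push_cast [ht_def]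
    have hη0 : (η : ℂ) ≠ 0 := by exact_mod_cast hη.ne'
    field_simp
  rw [hfac, Complex.log_ofReal_mul ht h1, ← Complex.ofReal_log ht.le]
  ring

lemma coreVal (η u : ℝ) (hη : 0 < η) :
    ∫ x in Ioi (0 : ℝ), (Complex.exp (Complex.I * u * x) - 1) *
        ((Real.exp (-x / η) / x : ℝ) : ℂ) =
      -Complex.log (1 - Complex.I * η * u) := by
  rcases le_total 0 u with hu | hu
  · exact coreVal_nonneg η u hη hu
  · have h := coreVal_nonneg η (-u) hη (by linarith)
    have hcong : ∀ x : ℝ, (Complex.exp (Complex.I * u * x) - 1) *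
        ((Real.exp (-x / η) / x : ℝ) : ℂ) =
        (starRingEnd ℂ) ((Complex.exp (Complex.I * (-u) * x) - 1) *
          ((Real.exp (-x / η) / x : ℝ) : ℂ)) := by
      intro x
      rw [map_mul, map_sub, map_one, ← Complex.exp_conj, Complex.conj_ofReal]
      congr 2
      simp [Complex.conj_ofReal]
    simp_rw [hcong]
    simp only [Complex.ofReal_neg] at h
    rw [integral_conj, h]
    have hslit : ((1 : ℂ) - Complex.I * η * (-u)) ∈ Complex.slitPlane :=
      Complex.mem_slitPlane_iff.2 (Or.inl (by simp))
    rw [map_neg, ← Complex.log_conj _ (Complex.slitPlane_arg_ne_pi hslit)]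
    congr 2
    simp [Complex.conj_ofReal]
    ring

lemma vg_meas (α ηp ηm : ℝ) : Measurable (fun x => (vgLevyDensity α ηp ηm x : ℂ)) := by
  apply Complex.measurable_ofReal.comp
  unfold vgLevyDensity
  exact Measurable.ite (measurableSet_lt measurable_const measurable_id) (by fun_prop)
    (by fun_prop)

lemma F_aesm (α ηp ηm u : ℝ) (s : Set ℝ) : AEStronglyMeasurable (fun x : ℝ =>
    (Complex.exp (Complex.I * u * x) - 1) * (vgLevyDensity α ηp ηm x : ℂ))
    (volume.restrict s) := by
  apply Measurable.aestronglyMeasurable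
  exact ((Complex.measurable_exp.comp (by fun_prop)).sub measurable_const).mul
    (vg_meas α ηp ηm)

lemma norm_cexp_factor (u x : ℝ) :
    ‖Complex.exp (Complex.I * u * x) - 1‖ ≤ 2 * (|u| * |x|) := by
  have h : Complex.I * u * x = Complex.I * ((u * x : ℝ) : ℂ) := by push_cast; ring
  rw [h, ← abs_mul]
  exact norm_cexp_I_mul_sub_one_le (u * x)

lemma posIntegrable (α ηp ηm u : ℝ) (hα : 0 < α) (hηp : 0 < ηp) :
    IntegrableOn (fun x : ℝ =>
      (Complex.exp (Complex.I * u * x) - 1) * (vgLevyDensity α ηp ηm x : ℂ)) (Ioi 0) := by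
  have hg : Integrable (fun x : ℝ => 2 * |u| * α * Real.exp (-ηp⁻¹ * x))
      (volume.restrict (Ioi (0:ℝ))) :=
    ((exp_neg_integrableOn_Ioi 0 (by positivity)).const_mul _)
  apply Integrable.mono' hg (F_aesm α ηp ηm u _)
  filter_upwards [ae_restrict_mem measurableSet_Ioi] with x hx
  rw [mem_Ioi] at hx
  rw [norm_mul]
  have h2 : ‖((vgLevyDensity α ηp ηm x : ℝ) : ℂ)‖ = α * Real.exp (-x / ηp) / x := by
    rw [Complex.norm_real, vgLevyDensity, if_pos hx]
    exact Real.norm_of_nonneg (by positivity)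
  rw [h2]
  calc ‖Complex.exp (Complex.I * u * x) - 1‖ * (α * Real.exp (-x / ηp) / x)
      ≤ 2 * (|u| * |x|) * (α * Real.exp (-x / ηp) / x) := by
        apply mul_le_mul_of_nonneg_right (norm_cexp_factor u x) (by positivity)
    _ = 2 * |u| * α * Real.exp (-ηp⁻¹ * x) := by
        rw [abs_of_pos hx]
        rw [show -ηp⁻¹ * x = -x / ηp by ring]
        field_simp

lemma negAuxIntegrable (α ηp ηm u : ℝ) (hα : 0 < α) (hηm : 0 < ηm) :
    IntegrableOn (fun x : ℝ =>
      (Complex.exp (Complex.I * u * (-x : ℝ)) - 1) * (vgLevyDensity α ηp ηm (-x) : ℂ))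
      (Ioi 0) := by
  have hg : Integrable (fun x : ℝ => 2 * |u| * α * Real.exp (-ηm⁻¹ * x))
      (volume.restrict (Ioi (0:ℝ))) :=
    ((exp_neg_integrableOn_Ioi 0 (by positivity)).const_mul _)
  apply Integrable.mono' hg
  · apply Measurable.aestronglyMeasurable
    exact ((Complex.measurable_exp.comp (by fun_prop)).sub measurable_const).mul
      ((vg_meas α ηp ηm).comp measurable_neg)
  filter_upwards [ae_restrict_mem measurableSet_Ioi] with x hx
  rw [mem_Ioi] at hx
  rw [norm_mul]
  have h2 : ‖((vgLevyDensity α ηp ηm (-x) : ℝ) : ℂ)‖ = α * Real.exp (-x / ηm) / x := by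
    rw [Complex.norm_real, vgLevyDensity, if_neg (by linarith), abs_neg, abs_of_pos hx]
    rw [neg_div]
    exact Real.norm_of_nonneg (by positivity)
  rw [h2]
  have h3 : ‖Complex.exp (Complex.I * u * ((-x : ℝ) : ℂ)) - 1‖ ≤ 2 * (|u| * |x|) := by
    have h : Complex.I * u * ((-x : ℝ) : ℂ) = Complex.I * ((u * (-x) : ℝ) : ℂ) := by
      push_cast; ring
    rw [h]
    have := norm_cexp_I_mul_sub_one_le (u * (-x))
    rwa [abs_mul, abs_neg] at this
  calc ‖Complex.exp (Complex.I * u * ((-x : ℝ) : ℂ)) - 1‖ * (α * Real.exp (-x / ηm) / x)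
      ≤ 2 * (|u| * |x|) * (α * Real.exp (-x / ηm) / x) := by
        apply mul_le_mul_of_nonneg_right h3 (by positivity)
    _ = 2 * |u| * α * Real.exp (-ηm⁻¹ * x) := by
        rw [abs_of_pos hx, show -ηm⁻¹ * x = -x / ηm by ring]
        field_simp

lemma negIntegrable (α ηp ηm u : ℝ) (hα : 0 < α) (hηm : 0 < ηm) :
    IntegrableOn (fun x : ℝ =>
      (Complex.exp (Complex.I * u * x) - 1) * (vgLevyDensity α ηp ηm x : ℂ)) (Iio 0) := by
  have hpre : (Neg.neg ⁻¹' (Iio (0:ℝ))) = Ioi 0 := by ext x; simp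
  refine (MeasurePreserving.integrableOn_comp_preimage
    (Measure.measurePreserving_neg (volume : Measure ℝ))
    (Homeomorph.neg ℝ).measurableEmbedding).1 ?_
  rw [hpre]
  have := negAuxIntegrable α ηp ηm u hα hηm
  apply this.congr_fun _ measurableSet_Ioi
  intro x _
  rfl

end VGAux

open Set in
/-- The Lévy–Khintchine exponent of the variance–gamma model: the function
`x ↦ (e^{iux} - 1) ν(x)` is absolutely integrable on `ℝ \\ {0}`, its integral
equals `-α [Log(1 - iη₊u) + Log(1 + iη₋u)]` (principal branch), and hence its
exponential is the closed-form characteristic-function factor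
`((1 - iη₊u)(1 + iη₋u))^{-α}` (principal power). -/
theorem vg_levy_khintchine (α ηp ηm u : ℝ) (hα : 0 < α) (hηp : 0 < ηp)
    (hηm : 0 < ηm) :
    IntegrableOn (fun x : ℝ =>
        (Complex.exp (Complex.I * u * x) - 1) * (vgLevyDensity α ηp ηm x : ℂ))
      {(0 : ℝ)}ᶜ ∧
    (∫ x in {(0 : ℝ)}ᶜ,
        (Complex.exp (Complex.I * u * x) - 1) * (vgLevyDensity α ηp ηm x : ℂ)) =
      -(α : ℂ) * (Complex.log (1 - Complex.I * ηp * u) +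
        Complex.log (1 + Complex.I * ηm * u)) ∧
    Complex.exp (∫ x in {(0 : ℝ)}ᶜ,
        (Complex.exp (Complex.I * u * x) - 1) * (vgLevyDensity α ηp ηm x : ℂ)) =
      ((1 - Complex.I * ηp * u) * (1 + Complex.I * ηm * u)) ^ (-(α : ℂ)) := by
  set F : ℝ → ℂ := fun x =>
    (Complex.exp (Complex.I * u * x) - 1) * (vgLevyDensity α ηp ηm x : ℂ) with hF
  have hpos := posIntegrable α ηp ηm u hα hηp
  have hneg := negIntegrable α ηp ηm u hα hηm
  have hsplit : ({(0:ℝ)}ᶜ : Set ℝ) = Iio 0 ∪ Ioi 0 := (Set.Iio_union_Ioi).symm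
  have hInt : IntegrableOn F {(0:ℝ)}ᶜ := by rw [hsplit]; exact hneg.union hpos
  have hIoiVal : ∫ x in Ioi (0:ℝ), F x
      = (α:ℂ) * -Complex.log (1 - Complex.I * ηp * u) := by
    have hcong : ∀ x ∈ Ioi (0:ℝ), F x = (α:ℂ) * ((Complex.exp (Complex.I * u * x) - 1) *
        ((Real.exp (-x/ηp)/x : ℝ):ℂ)) := by
      intro x hx
      rw [mem_Ioi] at hx
      simp only [hF, vgLevyDensity, if_pos hx]
      push_cast
      ring
    rw [setIntegral_congr_fun measurableSet_Ioi hcong, MeasureTheory.integral_const_mul,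
      coreVal ηp u hηp]
  have hIioVal : ∫ x in Iio (0:ℝ), F x
      = (α:ℂ) * -Complex.log (1 + Complex.I * ηm * u) := by
    have hcompneg : ∫ x in Ioi (0:ℝ), F (-x) = ∫ x in Iio (0:ℝ), F x := by
      rw [← integral_Iic_eq_integral_Iio]
      simpa using integral_comp_neg_Ioi 0 F
    rw [← hcompneg]
    have hcong : ∀ x ∈ Ioi (0:ℝ), F (-x)
        = (α:ℂ) * ((Complex.exp (Complex.I * (-u) * x) - 1) *
          ((Real.exp (-x/ηm)/x : ℝ):ℂ)) := by
      intro x hx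
      rw [mem_Ioi] at hx
      simp only [hF, vgLevyDensity, if_neg (by linarith : ¬ (0:ℝ) < -x), abs_neg,
        abs_of_pos hx, neg_div]
      push_cast
      ring_nf
    have hcv := coreVal ηm (-u) hηm
    simp only [Complex.ofReal_neg] at hcv
    rw [setIntegral_congr_fun measurableSet_Ioi hcong, MeasureTheory.integral_const_mul, hcv]
    congr 2
    ring
  have hval : ∫ x in {(0:ℝ)}ᶜ, F x = -(α : ℂ) * (Complex.log (1 - Complex.I * ηp * u) +
      Complex.log (1 + Complex.I * ηm * u)) := by
    rw [hsplit, setIntegral_union ((Set.Iic_disjoint_Ioi le_rfl).mono_left Set.Iio_subset_Iic_self) measurableSet_Ioi hneg hpos,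
      hIioVal, hIoiVal]
    ring
  refine ⟨hInt, hval, ?_⟩
  rw [hval]
  set a : ℂ := 1 - Complex.I * ηp * u with ha_def
  set b : ℂ := 1 + Complex.I * ηm * u with hb_def
  have hare : a.re = 1 := by simp [ha_def]
  have hbre : b.re = 1 := by simp [hb_def]
  have ha : a ≠ 0 := fun h => by simp [h] at hare
  have hb : b ≠ 0 := fun h => by simp [h] at hbre
  have harga : |a.arg| < Real.pi/2 := Complex.abs_arg_lt_pi_div_two_iff.2 (Or.inl (by rw [hare]; norm_num))
  have hargb : |b.arg| < Real.pi/2 := Complex.abs_arg_lt_pi_div_two_iff.2 (Or.inl (by rw [hbre]; norm_num))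
  have hmem : a.arg + b.arg ∈ Set.Ioc (-Real.pi) Real.pi := by
    rw [abs_lt] at harga hargb
    constructor <;> [linarith [Real.pi_pos]; linarith [Real.pi_pos]]
  rw [Complex.cpow_def_of_ne_zero (mul_ne_zero ha hb), Complex.log_mul ha hb hmem]
  congr 1
  ring
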